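/- Pointwise Picone inequality: For p > 1, vectors x, y in R^N with y ≠ 0, and reals a ≥ 0, b > 0, one has p (a^{p-1}/b^{p-1}) ⟨x, |y|^{p-2} y⟩ - (p-1)(a^p/b^p)|y|^p ≤ |x|^p. -/

import Mathlib

/-!
By Cauchy–Schwarz the inner product is at most `‖x‖ ‖y‖^(p-1)`; with `s = (a / b) ‖y‖` the claim
then reads `p ‖x‖ s^(p-1) - (p-1) s^p ≤ ‖x‖^p`, which is Young's inequality for the exponents
`p` and `p / (p - 1)`.
-/

open Real
open scoped RealInnerProductSpace

theorem Real.mul_mul_rpow_sub_one_le {p u v : ℝ} (hp : 1 < p) (hu : 0 ≤ u) (hv : 0 ≤ v) :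
    p * u * v ^ (p - 1) ≤ u ^ p + (p - 1) * v ^ p := by
  have hpq := HolderConjugate.conjExponent hp
  have young := young_inequality_of_nonneg hu (rpow_nonneg hv (p - 1)) hpq
  rw [← rpow_mul hv, hpq.sub_one_mul_conj, conjExponent] at young
  calc p * u * v ^ (p - 1) = p * (u * v ^ (p - 1)) := mul_assoc _ _ _
    _ ≤ p * (u ^ p / p + v ^ p / (p / (p - 1))) := by gcongr
    _ = u ^ p + (p - 1) * v ^ p := by field_simp

theorem real_inner_rpow_sub_two_smul_le {E : Type*} [NormedAddCommGroup E] [InnerProductSpace ℝ E]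
    (x y : E) (p : ℝ) : ⟪x, ‖y‖ ^ (p - 2) • y⟫ ≤ ‖x‖ * ‖y‖ ^ (p - 1) := by
  rcases eq_or_ne y 0 with rfl | hy
  · simp only [smul_zero, inner_zero_right, norm_zero]
    exact mul_nonneg (norm_nonneg x) (rpow_nonneg le_rfl _)
  have hy0 : 0 < ‖y‖ := norm_pos_iff.mpr hy
  calc ⟪x, ‖y‖ ^ (p - 2) • y⟫ = ‖y‖ ^ (p - 2) * ⟪x, y⟫ := real_inner_smul_right _ _ _
    _ ≤ ‖y‖ ^ (p - 2) * (‖x‖ * ‖y‖) := by gcongr; exact real_inner_le_norm x y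
    _ = ‖x‖ * ‖y‖ ^ (p - 1) := by
      rw [show p - 1 = p - 2 + 1 by ring, rpow_add hy0, rpow_one]; ring

theorem picone_pointwise_inequality_general (N : ℕ) (p : ℝ) (hp : 1 < p)
    (x y : EuclideanSpace ℝ (Fin N))
    (a b : ℝ) (ha : 0 ≤ a) (hb : 0 < b) :
    p * (a ^ (p - 1) / b ^ (p - 1)) * (inner ℝ x ((‖y‖ ^ (p - 2)) • y) : ℝ)
      - (p - 1) * (a ^ p / b ^ p) * ‖y‖ ^ p ≤ ‖x‖ ^ p := by
  rw [← div_rpow ha hb.le, ← div_rpow ha hb.le]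
  have ht : 0 ≤ a / b := div_nonneg ha hb.le
  calc p * (a / b) ^ (p - 1) * ⟪x, ‖y‖ ^ (p - 2) • y⟫ - (p - 1) * (a / b) ^ p * ‖y‖ ^ p
      ≤ p * (a / b) ^ (p - 1) * (‖x‖ * ‖y‖ ^ (p - 1)) - (p - 1) * (a / b) ^ p * ‖y‖ ^ p := by
        gcongr
        exact real_inner_rpow_sub_two_smul_le x y p
    _ = p * ‖x‖ * (a / b * ‖y‖) ^ (p - 1) - (p - 1) * (a / b * ‖y‖) ^ p := by
        rw [mul_rpow ht (norm_nonneg y), mul_rpow ht (norm_nonneg y)]; ring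
    _ ≤ ‖x‖ ^ p := by
        linarith [mul_mul_rpow_sub_one_le hp (norm_nonneg x) (mul_nonneg ht (norm_nonneg y))]

theorem picone_pointwise_inequality (N : ℕ) (hN : 1 ≤ N) (p : ℝ) (hp : 1 < p)
    (x y : EuclideanSpace ℝ (Fin N)) (hy : y ≠ 0)
    (a b : ℝ) (ha : 0 ≤ a) (hb : 0 < b) :
    p * (a ^ (p - 1) / b ^ (p - 1)) * (inner ℝ x ((‖y‖ ^ (p - 2)) • y) : ℝ)
      - (p - 1) * (a ^ p / b ^ p) * ‖y‖ ^ p ≤ ‖x‖ ^ p :=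
  picone_pointwise_inequality_general N p hp x y a b ha hb
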